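/- For all integers k, l and every real y ≥ √3/2: φ_{k,l}(y) ≥ (1/2)·√(Q₁(k,l)); i.e. min_{y ≥ √3/2} φ_{k,l}(y) ≥ (1/2)·√(Q₁(k,l)). -/
import Mathlib

set_option maxHeartbeats 1000000

/-- The quadratic form `Q₁(k,l) = (2/√3)(k+(l+1)/2)² + (√3/2)(l+1/3)²`. -/
noncomputable def Q1 (k l : ℤ) : ℝ :=
  2 / Real.sqrt 3 * ((k : ℝ) + ((l : ℝ) + 1) / 2) ^ 2 +
    Real.sqrt 3 / 2 * ((l : ℝ) + 1 / 3) ^ 2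

/-- `φ_{k,l}(y) = (2k+l+1)²/(4y) + y(l + 1/2 − 1/(8y²))²`. -/
noncomputable def phiF (k l : ℤ) (y : ℝ) : ℝ :=
  (2 * (k : ℝ) + (l : ℝ) + 1) ^ 2 / (4 * y) +
    y * ((l : ℝ) + 1 / 2 - 1 / (8 * y ^ 2)) ^ 2

lemma phi_eq (k l : ℤ) (y : ℝ) (hy : 0 < y) :
    (2 * phiF k l y)^2 = 2*(2*(k:ℝ)+(l:ℝ)+1)^4*(1/(8*y^2))
      + 2*(2*(k:ℝ)+(l:ℝ)+1)^2*((l:ℝ)+1/2-1/(8*y^2))^2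
      + 4*y^2*((l:ℝ)+1/2-1/(8*y^2))^4 := by
  rw [phiF]
  have h : y ≠ 0 := hy.ne'
  field_simp
  ring

lemma Q1_eq (k l : ℤ) :
    Q1 k l = Real.sqrt 3/6 * (2*(k:ℝ)+(l:ℝ)+1)^2 + Real.sqrt 3/2 * ((l:ℝ)+1/3)^2 := by
  have hS3 : Real.sqrt 3 ^ 2 = 3 := Real.sq_sqrt (by norm_num)
  have hS0 : (0:ℝ) < Real.sqrt 3 := Real.sqrt_pos.mpr (by norm_num)
  have h : (2:ℝ) / Real.sqrt 3 = 2 * Real.sqrt 3 / 3 := by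
    rw [div_eq_div_iff hS0.ne' (by norm_num)]; nlinarith
  rw [Q1, h]
  ring

lemma main_ineq (k l : ℤ) (y t : ℝ) (hy2 : 3/4 ≤ y^2) (ht0 : 0 < t) (ht6 : t ≤ 1/6)
    (htu : 8 * t * y^2 = 1) :
    3/10 * (2*(k:ℝ)+(l:ℝ)+1)^2 + 9/10 * ((l:ℝ)+1/3)^2 ≤
      2*(2*(k:ℝ)+(l:ℝ)+1)^4*t + 2*(2*(k:ℝ)+(l:ℝ)+1)^2*((l:ℝ)+1/2-t)^2
        + 4*y^2*((l:ℝ)+1/2-t)^4 := by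
  rcases le_or_gt 1 l with h1 | h1
  · -- l ≥ 1
    have hlr : (1:ℝ) ≤ (l:ℝ) := by exact_mod_cast h1
    obtain ⟨A, hA⟩ : ∃ A:ℝ, 2*(k:ℝ)+(l:ℝ)+1 = A := ⟨_, rfl⟩
    rw [hA]
    have hw : (4:ℝ)/3 ≤ (l:ℝ)+1/2-t := by linarith
    have hw2 : ((l:ℝ)+1/3)^2 ≤ ((l:ℝ)+1/2-t)^2 := by nlinarith
    have hw16 : (16:ℝ)/9 ≤ ((l:ℝ)+1/2-t)^2 := by nlinarith
    have h4 : ((l:ℝ)+1/3)^2 ≤ ((l:ℝ)+1/2-t)^4 := by nlinarith [sq_nonneg ((l:ℝ)+1/3)]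
    nlinarith [mul_nonneg (sq_nonneg A) (sub_nonneg.mpr hw16),
      mul_nonneg (by nlinarith : (0:ℝ) ≤ 4*y^2-3) (by positivity : (0:ℝ) ≤ ((l:ℝ)+1/2-t)^4),
      mul_nonneg (by positivity : (0:ℝ) ≤ A^4) ht0.le]
  rcases le_or_gt 0 l with h0 | h0
  · -- l = 0
    have hl0 : l = 0 := by omega
    subst hl0
    push_cast
    have hk : (1:ℤ) ≤ (2*k+1)^2 := by rcases le_or_gt 0 k with h|h <;> nlinarith
    have ha2 : (1:ℝ) ≤ (2*(k:ℝ)+1)^2 := by exact_mod_cast hk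
    obtain ⟨A, hA⟩ : ∃ A:ℝ, 2*(k:ℝ)+1 = A := ⟨_, rfl⟩
    rw [show 2*(k:ℝ)+0+1 = A by rw [← hA]; ring]
    rw [hA] at ha2
    have haa : A^2 ≤ A^4 := by nlinarith [sq_nonneg A]
    nlinarith [mul_nonneg ht0.le (sub_nonneg.mpr haa),
      mul_nonneg (sub_nonneg.mpr ha2) (by positivity : (0:ℝ) ≤ 1/5 + 2*t^2),
      sq_nonneg t,
      mul_nonneg (by positivity : (0:ℝ) ≤ 4*y^2) (by positivity : (0:ℝ) ≤ (1/2-t)^4)]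
  rcases le_or_gt l (-2) with h2 | h2
  · -- l ≤ -2
    have hlr : (l:ℝ) ≤ -2 := by exact_mod_cast h2
    obtain ⟨A, hA⟩ : ∃ A:ℝ, 2*(k:ℝ)+(l:ℝ)+1 = A := ⟨_, rfl⟩
    rw [hA]
    obtain ⟨W, hW⟩ : ∃ W:ℝ, (l:ℝ)+1/2-t = W := ⟨_, rfl⟩
    rw [hW]
    have hM : ((l:ℝ)+1/3) = W + t - 1/6 := by rw [← hW]; ring
    rw [hM]
    have hs : W ≤ -3/2 := by rw [← hW]; linarith
    have hw2 : (9:ℝ)/4 ≤ W^2 := by nlinarith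
    have hm2 : (W + t - 1/6)^2 ≤ 2*W^2 := by
      nlinarith [mul_nonneg (by linarith : (0:ℝ) ≤ -W)
        (by linarith : (0:ℝ) ≤ -W/9 - (1/6 - t)), sq_nonneg (t - 1/6)]
    have e1 : 3/10*A^2 ≤ 2*A^2*W^2 := by
      nlinarith [mul_nonneg (sq_nonneg A) (sub_nonneg.mpr hw2)]
    have e2 : 9/10*(W + t - 1/6)^2 ≤ 4*y^2*W^4 := by
      nlinarith [mul_nonneg (by nlinarith : (0:ℝ) ≤ 4*y^2-3) (by positivity : (0:ℝ) ≤ W^4),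
        mul_nonneg (sq_nonneg W) (sub_nonneg.mpr hw2), hm2, sq_nonneg W]
    have e3 : (0:ℝ) ≤ 2*A^4*t := by positivity
    linarith
  · -- l = -1
    have hl1 : l = -1 := by omega
    subst hl1
    push_cast
    obtain ⟨A, hA⟩ : ∃ A:ℝ, 2*(k:ℝ)+(-1)+1 = A := ⟨_, rfl⟩
    rw [hA]
    have e1 : 1/2*A^2 ≤ 2*A^2*((-1:ℝ)+1/2-t)^2 := by
      nlinarith [mul_nonneg (sq_nonneg A) (by nlinarith : (0:ℝ) ≤ t + t^2)]
    have e2 : y^2/4 + 2*(t*y^2) ≤ 4*y^2*((-1:ℝ)+1/2-t)^4 := by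
      nlinarith [mul_nonneg (mul_nonneg (sq_nonneg y) (sq_nonneg t))
        (by nlinarith : (0:ℝ) ≤ 3/2 + 2*t + t^2)]
    have e3 : (0:ℝ) ≤ 2*A^4*t := by positivity
    nlinarith [e1, e2, e3, sq_nonneg A, htu, hy2]

/-- For all integers `k, l` and all `y ≥ √3/2`: `φ_{k,l}(y) ≥ (1/2)√(Q₁(k,l))`. -/
theorem phiF_lower (k l : ℤ) (y : ℝ) (hy : Real.sqrt 3 / 2 ≤ y) :
    1 / 2 * Real.sqrt (Q1 k l) ≤ phiF k l y := by
  have hS3 : Real.sqrt 3 ^ 2 = 3 := Real.sq_sqrt (by norm_num)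
  have hS0 : (0:ℝ) < Real.sqrt 3 := Real.sqrt_pos.mpr (by norm_num)
  have hS2 : Real.sqrt 3 ≤ 9/5 := by nlinarith
  have hy0 : (0:ℝ) < y := lt_of_lt_of_le (by positivity) hy
  have hy2 : (3:ℝ)/4 ≤ y^2 := by nlinarith
  have ht0 : (0:ℝ) < 1/(8*y^2) := by positivity
  have ht6 : (1:ℝ)/(8*y^2) ≤ 1/6 := by
    rw [div_le_div_iff₀ (by positivity) (by norm_num)]; nlinarith
  have htu : 8 * (1/(8*y^2)) * y^2 = 1 := by field_simp
  have hmain := main_ineq k l y (1/(8*y^2)) hy2 ht0 ht6 htu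
  have hexp := phi_eq k l y hy0
  have hQle : Q1 k l ≤ 3/10 * (2*(k:ℝ)+(l:ℝ)+1)^2 + 9/10 * ((l:ℝ)+1/3)^2 := by
    rw [Q1_eq]
    nlinarith [sq_nonneg (2*(k:ℝ)+(l:ℝ)+1), sq_nonneg ((l:ℝ)+1/3)]
  have hkey : Q1 k l ≤ (2 * phiF k l y)^2 := by
    rw [hexp]; linarith
  have hphipos : 0 ≤ phiF k l y := by
    rw [phiF]; positivity
  have hfin : Real.sqrt (Q1 k l) ≤ 2 * phiF k l y :=
    calc Real.sqrt (Q1 k l) ≤ Real.sqrt ((2 * phiF k l y)^2) := Real.sqrt_le_sqrt hkey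
    _ = 2 * phiF k l y := Real.sqrt_sq (by linarith)
  linarith
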